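/- Let R be a ring, g ∈ R an idempotent, and ι_n : gRg → M_n(R) the upper-left corner inclusion composed with the inclusion gRg ⊆ R. If e, f ∈ gRg are idempotents that become Murray-von Neumann equivalent in M_n(R) for some n, then e and f are already Murray-von Neumann equivalent in gRg. -/

import Mathlib

/-!
A Murray-von Neumann equivalence `x * y = e`, `y * x = f` can always be compressed to one between
the corners, `e * x * f` and `f * y * e`. Applied in `Mₙ(R)` to `E = ι e` and `F = ι f`, the
compressed elements `E * x * F` and `F * y * E` are again supported in the `(0, 0)` entry, so
their entries `e * x₀₀ * f` and `f * y₀₀ * e` already implement the equivalence in `gRg`.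
-/

theorem Matrix.single_injective {m n α : Type*} [DecidableEq m] [DecidableEq n] [Zero α]
    (i : m) (j : n) : Function.Injective (Matrix.single i j : α → Matrix m n α) :=
  fun a b h => by simpa using congrFun (congrFun h i) j

theorem Subsemigroup.mul_mul_mul_eq_of_mem_corner {S : Type*} [Semigroup S] {g e f : S}
    (hg : IsIdempotentElem g) (he : e ∈ corner g) (hf : f ∈ corner g) (z : S) :
    g * (e * z * f) * g = e * z * f := by
  obtain ⟨hge, -⟩ := (mem_corner_iff hg).mp he
  obtain ⟨-, hfg⟩ := (mem_corner_iff hg).mp hf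
  calc g * (e * z * f) * g = g * e * z * (f * g) := by simp only [mul_assoc]
    _ = e * z * f := by rw [hge, hfg]

theorem IsIdempotentElem.compress_mul_compress_eq {S : Type*} [Semigroup S] {e f x y : S}
    (he : IsIdempotentElem e) (hxy : x * y = e) (hyx : y * x = f) :
    e * x * f * (f * y * e) = e := by
  subst hxy hyx
  calc x * y * x * (y * x) * (y * x * y * (x * y))
      = x * y * (x * y) * (x * y * (x * y) * (x * y)) := by simp only [mul_assoc]
    _ = x * y := by rw [he.eq, he.eq, he.eq]

/-- Let `R` be a ring, `g` an idempotent, and `e, f` idempotents of the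
corner `gRg` (expressed by `g*e*g = e`, `g*f*g = f`).  If for some `n` the images of
`e` and `f` under the upper-left corner inclusion `ι_n : gRg → Mₙ(R)`
(`a ↦ stdBasisMatrix 0 0 a`) are Murray-von Neumann equivalent in `Mₙ(R)`, then `e`
and `f` are Murray-von Neumann equivalent already in `gRg`. -/
theorem mvn_corner_of_matrix {R : Type*} [Ring R]
    (g e f : R) (hg : g * g = g) (he : e * e = e) (hf : f * f = f)
    (heg : g * e * g = e) (hfg : g * f * g = f)
    (hmat : ∃ (n : ℕ) (x y : Matrix (Fin (n + 1)) (Fin (n + 1)) R),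
      x * y = Matrix.single 0 0 e ∧
      y * x = Matrix.single 0 0 f) :
    ∃ x y : R, g * x * g = x ∧ g * y * g = y ∧ x * y = e ∧ y * x = f := by
  obtain ⟨n, x, y, hxy, hyx⟩ := hmat
  have hE : IsIdempotentElem (Matrix.single 0 0 e : Matrix (Fin (n + 1)) (Fin (n + 1)) R) := by
    rw [IsIdempotentElem, Matrix.single_mul_single_same, he]
  have hF : IsIdempotentElem (Matrix.single 0 0 f : Matrix (Fin (n + 1)) (Fin (n + 1)) R) := by
    rw [IsIdempotentElem, Matrix.single_mul_single_same, hf]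
  have hab := hE.compress_mul_compress_eq hxy hyx
  have hba := hF.compress_mul_compress_eq hyx hxy
  simp only [Matrix.single_mul_mul_single, Matrix.single_mul_single_same] at hab hba
  exact ⟨e * x 0 0 * f, f * y 0 0 * e,
    Subsemigroup.mul_mul_mul_eq_of_mem_corner hg ⟨e, heg⟩ ⟨f, hfg⟩ _,
    Subsemigroup.mul_mul_mul_eq_of_mem_corner hg ⟨f, hfg⟩ ⟨e, heg⟩ _,
    Matrix.single_injective 0 0 hab, Matrix.single_injective 0 0 hba⟩
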